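/- Let m ≥ 1 and let u : ℝ³ → ℝ^m be a C¹ map satisfying the domain variation identity on B₆₄(0). Then for every x ∈ ℝ³ and r > 0 with the closed ball B̄_r(x) contained in B₆₄(0), the function r ↦ D_φ(x,r) is differentiable at r and ∂_r D_φ(x,r) = D_φ(x,r)/r + 2 E_φ(x,r)/r². -/

import Mathlib

/-!
Differentiating under the integral sign, which is legitimate because `φ` is Lipschitz and is
differentiable off the null set `{|y - x| ∈ {r/2, r}}`, gives
`∂_r D_φ(x,r) = r⁻² ∫ |∇u|² |y - x| ψ(|x - y|/r)`.
Testing the domain variation identity against the radial field `X(z) = φ(|z - x|/r) (z - x)`,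
whose differential is `φ Id - ψ/(r|z - x|) (z - x) ⊗ (z - x)` almost everywhere, identifies this
last integral with `r D_φ(x,r) + 2 E_φ(x,r)`.
-/

open MeasureTheory Metric

noncomputable section

/-- `ℝ³` as a Euclidean space. -/
abbrev E3 : Type := EuclideanSpace ℝ (Fin 3)

/-- The cutoff function `φ`: `1` on `[0,1/2]`, `2 - 2t` on `[1/2,1]`, `0` on `[1,∞)`. -/
def phi (t : ℝ) : ℝ := if t ≤ 1/2 then 1 else if t ≤ 1 then 2 - 2*t else 0

/-- The weight `ψ = -φ'` (a.e.): `2` on `(1/2,1)` and `0` otherwise. -/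
def psi (t : ℝ) : ℝ := if 1/2 < t ∧ t < 1 then 2 else 0

/-- The standard orthonormal basis of `ℝ³`. -/
def e3 (i : Fin 3) : E3 := EuclideanSpace.basisFun (Fin 3) ℝ i

/-- The radial unit vector field `ν_x(y) = (y - x)/|y - x|`. -/
def nu (x y : E3) : E3 := ‖y - x‖⁻¹ • (y - x)

/-- Squared Frobenius norm of the differential `|∇u(y)|²`. -/
def gradSq {m : ℕ} (u : E3 → EuclideanSpace ℝ (Fin m)) (y : E3) : ℝ :=
  ∑ i : Fin 3, ‖fderiv ℝ u y (e3 i)‖ ^ 2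

/-- Smoothed Dirichlet energy `D_φ(x,r)`. -/
def Dphi {m : ℕ} (u : E3 → EuclideanSpace ℝ (Fin m)) (x : E3) (r : ℝ) : ℝ :=
  ∫ y : E3, gradSq u y * phi (‖x - y‖ / r)

/-- Smoothed height `H_φ(x,r)`. -/
def Hphi {m : ℕ} (u : E3 → EuclideanSpace ℝ (Fin m)) (x : E3) (r : ℝ) : ℝ :=
  ∫ y : E3, ‖u y‖ ^ 2 * ‖y - x‖⁻¹ * psi (‖x - y‖ / r)

/-- Smoothed remainder `E_φ(x,r)`. -/
def Ephi {m : ℕ} (u : E3 → EuclideanSpace ℝ (Fin m)) (x : E3) (r : ℝ) : ℝ :=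
  ∫ y : E3, ‖fderiv ℝ u y (nu x y)‖ ^ 2 * ‖y - x‖ * psi (‖x - y‖ / r)

/-- Smoothed frequency `N_φ(x,r) = r D_φ(x,r)/H_φ(x,r)`. -/
def Nphi {m : ℕ} (u : E3 → EuclideanSpace ℝ (Fin m)) (x : E3) (r : ℝ) : ℝ :=
  r * Dphi u x r / Hphi u x r

/-- Frequency pinching `W_s^r(x) = N_φ(x,r) - N_φ(x,s)`. -/
def Wpinch {m : ℕ} (u : E3 → EuclideanSpace ℝ (Fin m)) (x : E3) (s r : ℝ) : ℝ :=
  Nphi u x r - Nphi u x s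

/-- Classical height: integral of `|u|²` over the sphere `∂B_s(x)` with respect to the
two-dimensional Hausdorff (surface) measure. -/
def sphHeight {m : ℕ} (u : E3 → EuclideanSpace ℝ (Fin m)) (x : E3) (s : ℝ) : ℝ :=
  ∫ y in sphere x s, ‖u y‖ ^ 2 ∂(μH[2])

/-- `u` satisfies the inner (target) variation identity on `Ω`. -/
def InnerVariation {m : ℕ} (u : E3 → EuclideanSpace ℝ (Fin m)) (Ω : Set E3) : Prop :=
  ∀ f : E3 → ℝ, (∃ K, LipschitzWith K f) → HasCompactSupport f → tsupport f ⊆ Ω →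
    (∫ y : E3, ((inner ℝ (gradient (fun z => ‖u z‖ ^ 2 / 2) y) (gradient f y) : ℝ)
      + gradSq u y * f y)) = 0

/-- `u` satisfies the domain variation identity on `Ω`. -/
def DomainVariation {m : ℕ} (u : E3 → EuclideanSpace ℝ (Fin m)) (Ω : Set E3) : Prop :=
  ∀ X : E3 → E3, (∃ K, LipschitzWith K X) → HasCompactSupport X → tsupport X ⊆ Ω →
    (∫ y : E3, (2 * ∑ i : Fin 3, ∑ j : Fin 3,
        (inner ℝ (fderiv ℝ u y (e3 i)) (fderiv ℝ u y (e3 j)) : ℝ)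
          * (inner ℝ (fderiv ℝ X y (e3 i)) (e3 j) : ℝ)
      - gradSq u y * ∑ j : Fin 3, (inner ℝ (fderiv ℝ X y (e3 j)) (e3 j) : ℝ))) = 0

/-- The affine line through `a` in direction `v`. -/
def lineThrough (a v : E3) : Set E3 := {y | ∃ t : ℝ, y = a + t • v}

/-- Jones-type `β₂` number `D_μ(x,r)`: infimum over affine lines `L` of
`r⁻³ ∫_{B_r(x)} dist(y,L)² dμ(y)`. -/
def JonesD (μ : Measure E3) (x : E3) (r : ℝ) : ℝ :=
  ⨅ p : E3 × {v : E3 // v ≠ 0},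
    (∫ y in ball x r, Metric.infDist y (lineThrough p.1 p.2.1) ^ 2 ∂μ) / r ^ 3

open Filter

lemma phi_of_le_half {t : ℝ} (h : t ≤ 1 / 2) : phi t = 1 := if_pos h

lemma phi_of_mem_Ioo {t : ℝ} (h₁ : 1 / 2 < t) (h₂ : t < 1) : phi t = 2 - 2 * t := by
  rw [phi, if_neg (not_le.2 h₁), if_pos h₂.le]

lemma phi_of_one_le {t : ℝ} (h : 1 ≤ t) : phi t = 0 := by
  unfold phi; split_ifs <;> linarith

lemma psi_of_mem_Ioo {t : ℝ} (h₁ : 1 / 2 < t) (h₂ : t < 1) : psi t = 2 := if_pos ⟨h₁, h₂⟩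

lemma psi_of_notMem_Ioo {t : ℝ} (h : t ∉ Set.Ioo (1 / 2) 1) : psi t = 0 := if_neg h

lemma psi_nonneg (t : ℝ) : 0 ≤ psi t := by unfold psi; split <;> norm_num

lemma psi_le_two (t : ℝ) : psi t ≤ 2 := by unfold psi; split <;> norm_num

lemma measurable_psi : Measurable psi :=
  Measurable.ite measurableSet_Ioo measurable_const measurable_const

lemma phi_eq_max_min (t : ℝ) : phi t = max 0 (min 1 (2 - 2 * t)) := by
  unfold phi
  split_ifs with h₁ h₂ <;> simp only [min_def, max_def] <;> split_ifs <;> linarith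

lemma phi_nonneg (t : ℝ) : 0 ≤ phi t := by
  rw [phi_eq_max_min]; exact le_max_left _ _

lemma phi_le_one (t : ℝ) : phi t ≤ 1 := by
  rw [phi_eq_max_min]; exact max_le zero_le_one (min_le_left _ _)

lemma lipschitzWith_phi : LipschitzWith 2 phi := by
  have h : LipschitzWith 2 fun t : ℝ => 2 - 2 * t := LipschitzWith.of_dist_le_mul fun s t => by
    rw [Real.dist_eq, Real.dist_eq, show 2 - 2 * s - (2 - 2 * t) = -(2 * (s - t)) by ring,
      abs_neg, abs_mul, abs_two, NNReal.coe_ofNat]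
  rw [funext phi_eq_max_min]
  exact (h.const_min 1).const_max 0

lemma hasDerivAt_phi {t : ℝ} (h₁ : t ≠ 1 / 2) (h₂ : t ≠ 1) : HasDerivAt phi (-psi t) t := by
  rcases lt_or_gt_of_ne h₁ with ht | ht
  · rw [psi_of_notMem_Ioo fun h => ht.not_gt h.1, neg_zero]
    refine (hasDerivAt_const t 1).congr_of_eventuallyEq ?_
    filter_upwards [Iio_mem_nhds ht] with s hs using phi_of_le_half hs.le
  rcases lt_or_gt_of_ne h₂ with ht' | ht'
  · rw [psi_of_mem_Ioo ht ht']
    refine ((((hasDerivAt_id t).const_mul 2).const_sub 2).congr_deriv (by simp))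
      |>.congr_of_eventuallyEq ?_
    filter_upwards [Ioo_mem_nhds ht ht'] with s hs using phi_of_mem_Ioo hs.1 hs.2
  · rw [psi_of_notMem_Ioo fun h => ht'.not_gt h.2, neg_zero]
    refine (hasDerivAt_const t 0).congr_of_eventuallyEq ?_
    filter_upwards [Ioi_mem_nhds ht'] with s hs using phi_of_one_le hs.le

lemma hasDerivAt_phi_div {a r : ℝ} (hr : r ≠ 0) (h₁ : a ≠ r / 2) (h₂ : a ≠ r) :
    HasDerivAt (fun s => phi (a / s)) (a * psi (a / r) / r ^ 2) r := by
  have ht₁ : a / r ≠ 1 / 2 := by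
    rw [ne_eq, div_eq_iff hr]; contrapose! h₁; linarith
  have ht₂ : a / r ≠ 1 := by rwa [ne_eq, div_eq_one_iff_eq hr]
  have := (hasDerivAt_phi ht₁ ht₂).comp r ((hasDerivAt_inv hr).const_mul a)
  simp only [Function.comp_def] at this
  exact this.congr_deriv (by ring)

lemma abs_phi_div_sub_phi_div_le {a r s s' : ℝ} (hr : 0 < r) (ha : 0 ≤ a) (ha' : a ≤ 2 * r)
    (hs : r / 2 ≤ s) (hs' : r / 2 ≤ s') :
    |phi (a / s) - phi (a / s')| ≤ 16 / r * |s - s'| := by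
  have hs₀ : 0 < s := by linarith
  have hs₀' : 0 < s' := by linarith
  calc |phi (a / s) - phi (a / s')| ≤ 2 * |a / s - a / s'| := by
        simpa only [Real.dist_eq, NNReal.coe_ofNat] using
          lipschitzWith_phi.dist_le_mul (a / s) (a / s')
    _ = 2 * a * |s - s'| / (s * s') := by
        rw [div_sub_div _ _ hs₀.ne' hs₀'.ne', show a * s' - s * a = a * (s' - s) by ring, abs_div,
          abs_mul, abs_of_nonneg ha, abs_of_pos (mul_pos hs₀ hs₀'), abs_sub_comm]
        ring
    _ ≤ 2 * (2 * r) * |s - s'| / ((r / 2) * (r / 2)) := by gcongr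
    _ = 16 / r * |s - s'| := by field_simp; ring

lemma integrable_of_norm_le_of_compact {X F : Type*} [TopologicalSpace X] [T2Space X]
    [MeasurableSpace X] [OpensMeasurableSpace X] {μ : Measure X} [IsFiniteMeasureOnCompacts μ]
    [NormedAddCommGroup F] {f : X → F} {g : X → ℝ} {K : Set X} (hK : IsCompact K)
    (hg : ContinuousOn g K) (hf : AEStronglyMeasurable f μ) (hfg : ∀ y ∈ K, ‖f y‖ ≤ g y)
    (hf₀ : ∀ y ∉ K, f y = 0) : Integrable f μ := by
  refine ((hg.integrableOn_compact hK).integrable_indicator hK.measurableSet).mono' hf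
    (Eventually.of_forall fun y => ?_)
  by_cases hy : y ∈ K
  · simpa [hy] using hfg y hy
  · simp [hy, hf₀ y hy]

section Radial

variable {E : Type*} [NormedAddCommGroup E] [NormedSpace ℝ E] [FiniteDimensional ℝ E]
  [MeasurableSpace E] [BorelSpace E] (μ : Measure E) [μ.IsAddHaarMeasure]

lemma ae_norm_sub_ne [Nontrivial E] (x : E) (c : ℝ) : ∀ᵐ y ∂μ, ‖y - x‖ ≠ c := by
  filter_upwards [measure_eq_zero_iff_ae_notMem.1 (μ.addHaar_sphere x c)] with y hy
  rwa [mem_sphere, dist_eq_norm] at hy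

lemma integrable_mul_phi {g : E → ℝ} (hg : Continuous g) (x : E) {s : ℝ} (hs : 0 < s) :
    Integrable (fun y => g y * phi (‖x - y‖ / s)) μ := by
  refine (hg.mul (lipschitzWith_phi.continuous.comp (by fun_prop))).integrable_of_hasCompactSupport
    (HasCompactSupport.intro (isCompact_closedBall x s) fun y hy => ?_)
  rw [mem_closedBall, dist_comm, dist_eq_norm, not_le] at hy
  show g y * phi (‖x - y‖ / s) = 0
  rw [phi_of_one_le ((one_le_div hs).2 hy.le), mul_zero]

lemma integrable_mul_norm_sub_mul_psi {f h : E → ℝ} (hf : AEStronglyMeasurable f μ)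
    (hh : Continuous h) (hfh : ∀ y, |f y| ≤ h y) (x : E) {r : ℝ} (hr : 0 < r) :
    Integrable (fun y => f y * ‖y - x‖ * psi (‖x - y‖ / r)) μ := by
  refine integrable_of_norm_le_of_compact (isCompact_closedBall x r)
    (g := fun y => h y * r * 2) (by fun_prop)
    (hf.mul (by fun_prop) |>.mul (measurable_psi.comp (by fun_prop)).aestronglyMeasurable)
    (fun y hy => ?_) (fun y hy => ?_)
  · rw [mem_closedBall, dist_eq_norm] at hy
    rw [Real.norm_eq_abs, abs_mul, abs_mul, abs_norm, abs_of_nonneg (psi_nonneg _)]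
    have hh₀ := (abs_nonneg _).trans (hfh y)
    exact mul_le_mul (mul_le_mul (hfh y) hy (norm_nonneg _) hh₀) (psi_le_two _) (psi_nonneg _)
      (by positivity)
  · rw [mem_closedBall, dist_comm, dist_eq_norm, not_le] at hy
    rw [psi_of_notMem_Ioo fun h => ((one_lt_div hr).2 hy).not_gt h.2, mul_zero]

theorem hasDerivAt_integral_mul_phi [Nontrivial E] {g : E → ℝ} (hg : Continuous g) (x : E)
    {r : ℝ} (hr : 0 < r) :
    HasDerivAt (fun s => ∫ y, g y * phi (‖x - y‖ / s) ∂μ)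
      ((∫ y, g y * ‖y - x‖ * psi (‖x - y‖ / r) ∂μ) / r ^ 2) r := by
  have hbound : Integrable ((closedBall x (2 * r)).indicator fun y => 16 / r * |g y|) μ :=
    ((by fun_prop : Continuous fun y => 16 / r * |g y|).continuousOn.integrableOn_compact
      (isCompact_closedBall x (2 * r))).integrable_indicator measurableSet_closedBall
  rw [← integral_div]
  refine (hasDerivAt_integral_of_dominated_loc_of_lip (ball_mem_nhds r (half_pos hr))
    ((eventually_gt_nhds hr).mono fun s hs => (integrable_mul_phi μ hg x hs).1)
    (integrable_mul_phi μ hg x hr) ?_ ?_ hbound ?_).2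
  · exact (hg.measurable.mul (by fun_prop) |>.mul (measurable_psi.comp (by fun_prop))
      |>.div_const _).aestronglyMeasurable
  · refine Eventually.of_forall fun y => LipschitzOnWith.of_dist_le_mul fun s hs s' hs' => ?_
    rw [mem_ball, Real.dist_eq, abs_lt] at hs hs'
    rw [Real.dist_eq, Real.dist_eq, ← mul_sub, abs_mul, Real.coe_nnabs]
    by_cases hy : y ∈ closedBall x (2 * r)
    · rw [Set.indicator_of_mem hy, abs_of_nonneg (by positivity : 0 ≤ 16 / r * |g y|),
        mul_comm (16 / r), mul_assoc]
      rw [mem_closedBall, dist_comm, dist_eq_norm] at hy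
      gcongr
      exact abs_phi_div_sub_phi_div_le hr (norm_nonneg _) hy (by linarith) (by linarith)
    · rw [mem_closedBall, dist_comm, dist_eq_norm, not_le] at hy
      rw [phi_of_one_le ((one_le_div (by linarith)).2 (by linarith)),
        phi_of_one_le ((one_le_div (by linarith)).2 (by linarith)), sub_self, abs_zero, mul_zero]
      positivity
  · filter_upwards [ae_norm_sub_ne μ x (r / 2), ae_norm_sub_ne μ x r] with y h₁ h₂
    rw [norm_sub_rev] at h₁ h₂
    refine (hasDerivAt_phi_div hr.ne' h₁ h₂).const_mul (g y) |>.congr_deriv ?_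
    rw [norm_sub_rev y]
    ring

end Radial

lemma hasFDerivAt_norm {F : Type*} [NormedAddCommGroup F] [InnerProductSpace ℝ F] {y : F}
    (hy : y ≠ 0) : HasFDerivAt (‖·‖) (‖y‖⁻¹ • innerSL ℝ y) y := by
  have hy' : ‖y‖ ≠ 0 := norm_ne_zero_iff.2 hy
  have := (Real.hasDerivAt_sqrt (pow_ne_zero 2 hy')).comp_hasFDerivAt y
    (hasStrictFDerivAt_norm_sq y).hasFDerivAt
  simp only [Function.comp_def, Real.sqrt_sq (norm_nonneg _)] at this
  refine this.congr_fderiv ?_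
  ext v
  simp only [smul_apply, smul_eq_mul, nsmul_eq_mul, Nat.cast_ofNat, innerSL_apply_apply]
  field_simp

section RadialField

variable {E : Type*} [NormedAddCommGroup E]

def radialField [NormedSpace ℝ E] (x : E) (r : ℝ) (z : E) : E := phi (‖z - x‖ / r) • (z - x)

lemma radialField_of_le [NormedSpace ℝ E] {x z : E} {r : ℝ} (hr : 0 < r) (hz : r ≤ ‖z - x‖) :
    radialField x r z = 0 := by
  rw [radialField, phi_of_one_le ((one_le_div hr).2 hz), zero_smul]

lemma tsupport_radialField_subset [NormedSpace ℝ E] (x : E) {r : ℝ} (hr : 0 < r) :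
    tsupport (radialField x r) ⊆ closedBall x r :=
  closure_minimal (Function.support_subset_iff'.2 fun z hz => radialField_of_le hr <| by
    rw [mem_closedBall, dist_eq_norm, not_le] at hz; exact hz.le) isClosed_closedBall

lemma norm_radialField_sub_le [NormedSpace ℝ E] {x y : E} {r : ℝ} (hr : 0 < r)
    (hy : ‖y - x‖ ≤ r) (z : E) :
    ‖radialField x r y - radialField x r z‖ ≤ 3 * ‖y - z‖ := by
  have hφ : |phi (‖y - x‖ / r) - phi (‖z - x‖ / r)| ≤ 2 / r * ‖y - z‖ := by
    calc |phi (‖y - x‖ / r) - phi (‖z - x‖ / r)|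
        ≤ 2 * |‖y - x‖ / r - ‖z - x‖ / r| := by
          simpa only [Real.dist_eq, NNReal.coe_ofNat] using lipschitzWith_phi.dist_le_mul _ _
      _ = 2 / r * |‖y - x‖ - ‖z - x‖| := by
          rw [← sub_div, abs_div, abs_of_pos hr]; ring
      _ ≤ 2 / r * ‖y - z‖ := by
          gcongr
          simpa only [sub_sub_sub_cancel_right] using abs_norm_sub_norm_le (y - x) (z - x)
  have hsplit : radialField x r y - radialField x r z
      = (phi (‖y - x‖ / r) - phi (‖z - x‖ / r)) • (y - x) + phi (‖z - x‖ / r) • (y - z) := by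
    simp only [radialField]; module
  calc ‖radialField x r y - radialField x r z‖
      ≤ |phi (‖y - x‖ / r) - phi (‖z - x‖ / r)| * ‖y - x‖ + |phi (‖z - x‖ / r)| * ‖y - z‖ := by
        rw [hsplit, ← Real.norm_eq_abs, ← Real.norm_eq_abs, ← norm_smul, ← norm_smul]
        exact norm_add_le _ _
    _ ≤ 2 / r * ‖y - z‖ * r + 1 * ‖y - z‖ := by
        gcongr
        rw [abs_le]; constructor <;> linarith [phi_nonneg (‖z - x‖ / r), phi_le_one (‖z - x‖ / r)]
    _ = 3 * ‖y - z‖ := by field_simp; ring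

lemma lipschitzWith_radialField [NormedSpace ℝ E] (x : E) {r : ℝ} (hr : 0 < r) :
    LipschitzWith 3 (radialField x r) := by
  refine LipschitzWith.of_dist_le_mul fun y z => ?_
  rw [dist_eq_norm, dist_eq_norm, NNReal.coe_ofNat]
  rcases le_or_gt ‖y - x‖ r with hy | hy
  · exact norm_radialField_sub_le hr hy z
  rcases le_or_gt ‖z - x‖ r with hz | hz
  · rw [norm_sub_rev, norm_sub_rev y]
    exact norm_radialField_sub_le hr hz y
  · rw [radialField_of_le hr hy.le, radialField_of_le hr hz.le, sub_self, norm_zero]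
    positivity

lemma hasFDerivAt_radialField [InnerProductSpace ℝ E] {x y : E} {r : ℝ} (hr : 0 < r)
    (h₀ : y ≠ x) (h₁ : ‖y - x‖ ≠ r / 2) (h₂ : ‖y - x‖ ≠ r) :
    HasFDerivAt (radialField x r)
      (phi (‖y - x‖ / r) • ContinuousLinearMap.id ℝ E
        - (psi (‖y - x‖ / r) / (r * ‖y - x‖)) • (innerSL ℝ (y - x)).smulRight (y - x)) y := by
  have ht₁ : ‖y - x‖ / r ≠ 1 / 2 := by
    rw [ne_eq, div_eq_iff hr.ne']; contrapose! h₁; linarith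
  have ht₂ : ‖y - x‖ / r ≠ 1 := by rwa [ne_eq, div_eq_one_iff_eq hr.ne']
  have hsub : HasFDerivAt (fun z => z - x) (ContinuousLinearMap.id ℝ E) y :=
    (hasFDerivAt_id y).sub_const x
  have hcoef := ((hasDerivAt_phi ht₁ ht₂).comp ‖y - x‖
    ((hasDerivAt_id _).div_const r)).comp_hasFDerivAt y
      ((hasFDerivAt_norm (sub_ne_zero.2 h₀)).comp y hsub)
  refine (hcoef.smul hsub).congr_fderiv ?_
  ext v
  simp only [add_apply, sub_apply, smul_apply, ContinuousLinearMap.smulRight_apply,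
    ContinuousLinearMap.comp_apply, innerSL_apply_apply, ContinuousLinearMap.id_apply,
    Function.comp_apply, id]
  have : ‖y - x‖ ≠ 0 := norm_ne_zero_iff.2 (sub_ne_zero.2 h₀)
  module

end RadialField

section DomainVariationAlgebra

variable {ι E F : Type*} [Fintype ι] [NormedAddCommGroup E] [InnerProductSpace ℝ E]
  [NormedAddCommGroup F] [InnerProductSpace ℝ F] (b : OrthonormalBasis ι ℝ E)

/-- For the standard basis `b`, `L = Du(y)` and `A = DX(y)` this is the integrand of
`DomainVariation`. -/
def domainVariationIntegrand (L : E →L[ℝ] F) (A : E →L[ℝ] E) : ℝ :=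
  2 * ∑ i, ∑ j, (inner ℝ (L (b i)) (L (b j)) : ℝ) * (inner ℝ (A (b i)) (b j) : ℝ)
    - (∑ i, ‖L (b i)‖ ^ 2) * ∑ j, (inner ℝ (A (b j)) (b j) : ℝ)

lemma sum_sum_inner_mul_inner_eq (L : E →L[ℝ] F) (A : E →L[ℝ] E) :
    ∑ i, ∑ j, (inner ℝ (L (b i)) (L (b j)) : ℝ) * (inner ℝ (A (b i)) (b j) : ℝ)
      = ∑ i, (inner ℝ (L (b i)) (L (A (b i))) : ℝ) := by
  refine Finset.sum_congr rfl fun i _ => ?_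
  conv_rhs => rw [← b.sum_repr' (A (b i)), map_sum, inner_sum]
  refine Finset.sum_congr rfl fun j _ => ?_
  rw [map_smul, real_inner_smul_right, real_inner_comm (b j)]
  ring

lemma sum_inner_mul_inner_map_eq (L : E →L[ℝ] F) (w : E) :
    ∑ i, (inner ℝ (b i) w : ℝ) * (inner ℝ (L (b i)) (L w) : ℝ) = ‖L w‖ ^ 2 := by
  calc ∑ i, (inner ℝ (b i) w : ℝ) * (inner ℝ (L (b i)) (L w) : ℝ)
      = inner ℝ (L (∑ i, (inner ℝ (b i) w : ℝ) • b i)) (L w) := by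
        simp only [map_sum, map_smul, sum_inner, real_inner_smul_left]
    _ = ‖L w‖ ^ 2 := by rw [b.sum_repr', real_inner_self_eq_norm_sq]

lemma domainVariationIntegrand_smul_id_sub_smul_rankOne (L : E →L[ℝ] F) (a c : ℝ) (w : E) :
    domainVariationIntegrand b L (a • ContinuousLinearMap.id ℝ E - c • (innerSL ℝ w).smulRight w)
      = (2 - Fintype.card ι) * a * ∑ i, ‖L (b i)‖ ^ 2 - 2 * c * ‖L w‖ ^ 2
        + c * (∑ i, ‖L (b i)‖ ^ 2) * ‖w‖ ^ 2 := by
  have hA : ∀ v, (a • ContinuousLinearMap.id ℝ E - c • (innerSL ℝ w).smulRight w) v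
      = a • v - (c * inner ℝ w v) • w := fun v => by
    simp [mul_smul]
  have hdiag : ∑ i, (inner ℝ (L (b i)) (L (a • b i - (c * inner ℝ w (b i)) • w)) : ℝ)
      = a * ∑ i, ‖L (b i)‖ ^ 2 - c * ‖L w‖ ^ 2 := by
    simp only [map_sub, map_smul, inner_sub_right, real_inner_smul_right,
      real_inner_self_eq_norm_sq, Finset.sum_sub_distrib, mul_assoc, ← Finset.mul_sum]
    rw [← sum_inner_mul_inner_map_eq b L w]
    simp only [real_inner_comm w]
  have htrace : ∑ j, (inner ℝ (a • b j - (c * inner ℝ w (b j)) • w) (b j) : ℝ)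
      = a * Fintype.card ι - c * ‖w‖ ^ 2 := by
    simp only [inner_sub_left, real_inner_smul_left, real_inner_self_eq_norm_sq, b.orthonormal.1,
      Finset.sum_sub_distrib, one_pow, mul_one, Finset.sum_const, Finset.card_univ, nsmul_eq_mul,
      mul_assoc, ← Finset.mul_sum]
    rw [← real_inner_self_eq_norm_sq, ← b.sum_inner_mul_inner w w]
    simp only [real_inner_comm w]
    ring
  rw [domainVariationIntegrand, sum_sum_inner_mul_inner_eq]
  simp only [hA, hdiag, htrace]
  ring

end DomainVariationAlgebra

section Energy

variable {m : ℕ} {u : E3 → EuclideanSpace ℝ (Fin m)}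

lemma continuous_gradSq (hu : ContDiff ℝ 1 u) : Continuous (gradSq u) := by
  have := hu.continuous_fderiv one_ne_zero
  unfold gradSq
  fun_prop

lemma norm_nu_le_one (x y : E3) : ‖nu x y‖ ≤ 1 := by
  rcases eq_or_ne (y - x) 0 with h | h
  · simp [nu, h]
  · rw [nu, norm_smul, norm_inv, norm_norm, inv_mul_cancel₀ (norm_ne_zero_iff.2 h)]

lemma integrable_gradSq_mul_psi (hu : ContDiff ℝ 1 u) (x : E3) {r : ℝ} (hr : 0 < r) :
    Integrable fun y => gradSq u y * ‖y - x‖ * psi (‖x - y‖ / r) :=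
  integrable_mul_norm_sub_mul_psi volume (continuous_gradSq hu).aestronglyMeasurable
    (continuous_gradSq hu) (fun y => (abs_of_nonneg (by unfold gradSq; positivity)).le) x hr

lemma integrable_fderiv_nu_sq_mul_psi (hu : ContDiff ℝ 1 u) (x : E3) {r : ℝ} (hr : 0 < r) :
    Integrable fun y => ‖fderiv ℝ u y (nu x y)‖ ^ 2 * ‖y - x‖ * psi (‖x - y‖ / r) := by
  have hDu := hu.continuous_fderiv one_ne_zero
  refine integrable_mul_norm_sub_mul_psi volume ?_ (h := fun y => ‖fderiv ℝ u y‖ ^ 2)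
    (by fun_prop) (fun y => ?_) x hr
  · exact (by unfold nu; fun_prop : Measurable fun y => ‖fderiv ℝ u y (nu x y)‖ ^ 2)
      |>.aestronglyMeasurable
  · rw [abs_of_nonneg (by positivity)]
    gcongr
    simpa using (fderiv ℝ u y).le_opNorm_of_le (norm_nu_le_one x y)

lemma domainVariationIntegrand_radialField_eq (x : E3) {r : ℝ}
    (hr : 0 < r) {y : E3} (h₀ : y ≠ x) (h₁ : ‖y - x‖ ≠ r / 2) (h₂ : ‖y - x‖ ≠ r) :
    domainVariationIntegrand (EuclideanSpace.basisFun (Fin 3) ℝ) (fderiv ℝ u y)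
        (fderiv ℝ (radialField x r) y)
      = gradSq u y * ‖y - x‖ * psi (‖x - y‖ / r) / r - gradSq u y * phi (‖x - y‖ / r)
        - 2 / r * (‖fderiv ℝ u y (nu x y)‖ ^ 2 * ‖y - x‖ * psi (‖x - y‖ / r)) := by
  have hw : ‖y - x‖ ≠ 0 := norm_ne_zero_iff.2 (sub_ne_zero.2 h₀)
  have hν : ‖fderiv ℝ u y (y - x)‖ ^ 2 = ‖y - x‖ ^ 2 * ‖fderiv ℝ u y (nu x y)‖ ^ 2 := by
    rw [nu, map_smul, norm_smul, norm_inv, norm_norm]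
    field_simp
  rw [(hasFDerivAt_radialField hr h₀ h₁ h₂).fderiv,
    domainVariationIntegrand_smul_id_sub_smul_rankOne, hν, Fintype.card_fin, norm_sub_rev x y]
  change (2 - (3 : ℕ)) * _ * gradSq u y - _ + _ * gradSq u y * _ = _
  field_simp
  ring

theorem integral_gradSq_mul_psi (hu : ContDiff ℝ 1 u) {Ω : Set E3} (hdv : DomainVariation u Ω)
    {x : E3} {r : ℝ} (hr : 0 < r) (hball : closedBall x r ⊆ Ω) :
    ∫ y, gradSq u y * ‖y - x‖ * psi (‖x - y‖ / r) = r * Dphi u x r + 2 * Ephi u x r := by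
  have hsupp := tsupport_radialField_subset x hr
  have hvar : ∫ y, domainVariationIntegrand (EuclideanSpace.basisFun (Fin 3) ℝ) (fderiv ℝ u y)
      (fderiv ℝ (radialField x r) y) = 0 :=
    hdv _ ⟨3, lipschitzWith_radialField x hr⟩
      ((isCompact_closedBall x r).of_isClosed_subset (isClosed_tsupport _) hsupp)
      (hsupp.trans hball)
  have hae : (fun y => domainVariationIntegrand (EuclideanSpace.basisFun (Fin 3) ℝ) (fderiv ℝ u y)
      (fderiv ℝ (radialField x r) y)) =ᵐ[volume]
      fun y => gradSq u y * ‖y - x‖ * psi (‖x - y‖ / r) / r - gradSq u y * phi (‖x - y‖ / r)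
        - 2 / r * (‖fderiv ℝ u y (nu x y)‖ ^ 2 * ‖y - x‖ * psi (‖x - y‖ / r)) := by
    filter_upwards [ae_norm_sub_ne volume x 0, ae_norm_sub_ne volume x (r / 2),
      ae_norm_sub_ne volume x r] with y h₀ h₁ h₂
    exact domainVariationIntegrand_radialField_eq x hr (sub_ne_zero.1 (norm_ne_zero_iff.1 h₀)) h₁ h₂
  have hI := integrable_gradSq_mul_psi hu x hr
  have hD := integrable_mul_phi volume (continuous_gradSq hu) x hr
  have hE := integrable_fderiv_nu_sq_mul_psi hu x hr
  rw [integral_congr_ae hae, integral_sub, integral_sub, integral_div, integral_const_mul] at hvar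
  · rw [Dphi, Ephi]
    field_simp at hvar
    linarith
  exacts [hI.div_const r, hD, (hI.div_const r).sub hD, hE.const_mul _]

end Energy

theorem stmt_1_general {m : ℕ} (u : E3 → EuclideanSpace ℝ (Fin m))
    (hu : ContDiff ℝ 1 u) (hdv : DomainVariation u (ball (0 : E3) 64)) :
    ∀ (x : E3) (r : ℝ), 0 < r → closedBall x r ⊆ ball (0 : E3) 64 →
      HasDerivAt (fun s : ℝ => Dphi u x s)
        (Dphi u x r / r + 2 * Ephi u x r / r ^ 2) r := by
  intro x r hr hball
  have h := hasDerivAt_integral_mul_phi volume (continuous_gradSq hu) x hr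
  rw [integral_gradSq_mul_psi hu hdv hr hball] at h
  exact h.congr_deriv (by field_simp)

/-- radial derivative of the smoothed Dirichlet energy. -/
theorem stmt_1 {m : ℕ} (hm : 1 ≤ m) (u : E3 → EuclideanSpace ℝ (Fin m))
    (hu : ContDiff ℝ 1 u) (hdv : DomainVariation u (ball (0 : E3) 64)) :
    ∀ (x : E3) (r : ℝ), 0 < r → closedBall x r ⊆ ball (0 : E3) 64 →
      HasDerivAt (fun s : ℝ => Dphi u x s)
        (Dphi u x r / r + 2 * Ephi u x r / r ^ 2) r :=
  stmt_1_general u hu hdv
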